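/- Let B be a strongly E-Birkhoff Galois structure on a Barr exact category C. Coverings are stable under quotients along double extensions: if (φ₁, φ₀) : f_A → f_B is a double extension and f_A is a covering, then f_B is a covering. -/

import Mathlib

open CategoryTheory CategoryTheory.Limits

universe v u

namespace Paper

variable {C : Type u} [Category.{v} C]

/-- `f` is a regular epimorphism. -/
def IsRegEpi {X Y : C} (f : X ⟶ Y) : Prop := Nonempty (RegularEpi f)

/-- A regular category: a finitely complete category with coequalizers of kernel pairs in
which regular epimorphisms are stable under pullback. -/
class RegularCat (C : Type u) [Category.{v} C] [HasFiniteLimits C] : Prop where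
  hasCoeqOfKernelPairs : ∀ {X Y : C} (f : X ⟶ Y),
    HasCoequalizer (pullback.fst f f) (pullback.snd f f)
  regEpiPullbackStable : ∀ {X Y Z : C} (f : X ⟶ Y) (g : Z ⟶ Y),
    IsRegEpi f → IsRegEpi (pullback.snd f g)

/-- An internal equivalence relation given by a parallel pair `r₁ r₂ : R ⟶ X`. -/
structure IsEquivRel [HasFiniteLimits C] {R X : C} (r₁ r₂ : R ⟶ X) : Prop where
  jointlyMono : Mono (prod.lift r₁ r₂)
  refl : ∃ d : X ⟶ R, d ≫ r₁ = 𝟙 X ∧ d ≫ r₂ = 𝟙 X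
  symm : ∃ s : R ⟶ R, s ≫ r₁ = r₂ ∧ s ≫ r₂ = r₁
  trans : ∃ t : pullback r₂ r₁ ⟶ R,
    t ≫ r₁ = pullback.fst r₂ r₁ ≫ r₁ ∧ t ≫ r₂ = pullback.snd r₂ r₁ ≫ r₂

/-- A Barr exact category: a regular category in which every internal equivalence relation
is effective (i.e. is a kernel pair). -/
class BarrExact (C : Type u) [Category.{v} C] [HasFiniteLimits C] extends RegularCat C : Prop where
  equivRelEffective : ∀ {R X : C} (r₁ r₂ : R ⟶ X), IsEquivRel r₁ r₂ →
    ∃ (Y : C) (f : X ⟶ Y), IsKernelPair f r₁ r₂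

section DoubleExt
variable [HasFiniteLimits C]

/-- A double extension: a commutative square `αt ≫ fB = fA ≫ αb` of regular epimorphisms
whose comparison morphism to the pullback is also a regular epimorphism. -/
structure IsDoubleExt {A₁ A₀ B₁ B₀ : C} (fA : A₁ ⟶ A₀) (fB : B₁ ⟶ B₀)
    (αt : A₁ ⟶ B₁) (αb : A₀ ⟶ B₀) : Prop where
  w : αt ≫ fB = fA ≫ αb
  left : IsRegEpi fA
  right : IsRegEpi fB
  top : IsRegEpi αt
  bot : IsRegEpi αb
  comparison : IsRegEpi (pullback.lift fA αt w.symm : A₁ ⟶ pullback αb fB)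

end DoubleExt

/-- The category `Ext C` of extensions: the full subcategory of the arrow category of `C`
determined by the regular epimorphisms. -/
abbrev ExtCat (C : Type u) [Category.{v} C] : Type max u v :=
  ObjectProperty.FullSubcategory (fun f : Arrow C => IsRegEpi f.hom)

/-- An object of `Ext C` from a regular epimorphism. -/
def ExtCat.mk' {X Y : C} (f : X ⟶ Y) (hf : IsRegEpi f) : ExtCat C :=
  ⟨Arrow.mk f, hf⟩

/-- The top (domain) component of a morphism of `Ext C`. -/
def ExtCat.homLeft {f g : ExtCat C} (φ : f ⟶ g) : f.obj.left ⟶ g.obj.left :=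
  CommaMorphism.left φ.hom

/-- The bottom (codomain) component of a morphism of `Ext C`. -/
def ExtCat.homRight {f g : ExtCat C} (φ : f ⟶ g) : f.obj.right ⟶ g.obj.right :=
  CommaMorphism.right φ.hom

lemma ExtCat.homLeft_comp {f g h : ExtCat C} (a : f ⟶ g) (b : g ⟶ h) :
    ExtCat.homLeft (a ≫ b) = ExtCat.homLeft a ≫ ExtCat.homLeft b := rfl

lemma ExtCat.homRight_comp {f g h : ExtCat C} (a : f ⟶ g) (b : g ⟶ h) :
    ExtCat.homRight (a ≫ b) = ExtCat.homRight a ≫ ExtCat.homRight b := rfl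

lemma ExtCat.hom_w {f g : ExtCat C} (φ : f ⟶ g) :
    ExtCat.homLeft φ ≫ g.obj.hom = f.obj.hom ≫ ExtCat.homRight φ :=
  CommaMorphism.w φ.hom

/-- A morphism of `Ext C` from a commutative square in `C`. -/
def ExtCat.homMk' {X₁ X₀ Y₁ Y₀ : C} {f : X₁ ⟶ X₀} {g : Y₁ ⟶ Y₀}
    {hf : IsRegEpi f} {hg : IsRegEpi g}
    (u : X₁ ⟶ Y₁) (v : X₀ ⟶ Y₀) (w : u ≫ g = f ≫ v) :
    ExtCat.mk' f hf ⟶ ExtCat.mk' g hg :=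
  ObjectProperty.homMk (Arrow.homMk (u := u) (v := v) w)

/-- A (commutative) square in `C`, with left vertical `left : A₁ ⟶ A₀`, right vertical
`right : B₁ ⟶ B₀`, top horizontal `top : A₁ ⟶ B₁` and bottom horizontal `bot : A₀ ⟶ B₀`. -/
structure Sq (C : Type u) [Category.{v} C] where
  A₁ : C
  A₀ : C
  B₁ : C
  B₀ : C
  left : A₁ ⟶ A₀
  right : B₁ ⟶ B₀
  top : A₁ ⟶ B₁
  bot : A₀ ⟶ B₀
  w : top ≫ right = left ≫ bot

/-- The square is a double extension. -/
def Sq.IsDE [HasFiniteLimits C] (s : Sq C) : Prop :=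
  IsDoubleExt s.left s.right s.top s.bot

/-- A commutative cube, presented as a morphism of squares `Φ : s ⟶ t`. -/
structure SqHom (s t : Sq C) where
  h₁₁ : s.A₁ ⟶ t.A₁
  h₁₀ : s.A₀ ⟶ t.A₀
  h₀₁ : s.B₁ ⟶ t.B₁
  h₀₀ : s.B₀ ⟶ t.B₀
  wA : h₁₁ ≫ t.left = s.left ≫ h₁₀
  wB : h₀₁ ≫ t.right = s.right ≫ h₀₀
  wt : h₁₁ ≫ t.top = s.top ≫ h₀₁
  wb : h₁₀ ≫ t.bot = s.bot ≫ h₀₀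

/-- Composition of cubes (as morphisms of squares). -/
def SqHom.comp {s t u : Sq C} (Φ : SqHom s t) (Ψ : SqHom t u) : SqHom s u where
  h₁₁ := Φ.h₁₁ ≫ Ψ.h₁₁
  h₁₀ := Φ.h₁₀ ≫ Ψ.h₁₀
  h₀₁ := Φ.h₀₁ ≫ Ψ.h₀₁
  h₀₀ := Φ.h₀₀ ≫ Ψ.h₀₀
  wA := by rw [Category.assoc, Ψ.wA, ← Category.assoc, Φ.wA, Category.assoc]
  wB := by rw [Category.assoc, Ψ.wB, ← Category.assoc, Φ.wB, Category.assoc]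
  wt := by rw [Category.assoc, Ψ.wt, ← Category.assoc, Φ.wt, Category.assoc]
  wb := by rw [Category.assoc, Ψ.wb, ← Category.assoc, Φ.wb, Category.assoc]

section Cube
variable [HasFiniteLimits C]

/-- Seen as a morphism `(σ, β) : s ⟶ t` between the double extensions `s` (as the arrow
`s.left → s.right`) and `t`, the face `σ` of the cube: the square from `s.left` to `t.left`. -/
def SqHom.sigmaSq {s t : Sq C} (Φ : SqHom s t) : Sq C where
  A₁ := s.A₁
  A₀ := s.A₀
  B₁ := t.A₁
  B₀ := t.A₀
  left := s.left
  right := t.left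
  top := Φ.h₁₁
  bot := Φ.h₁₀
  w := Φ.wA

/-- The face `β` of the cube: the square from `s.right` to `t.right`. -/
def SqHom.betaSq {s t : Sq C} (Φ : SqHom s t) : Sq C where
  A₁ := s.B₁
  A₀ := s.B₀
  B₁ := t.B₁
  B₀ := t.B₀
  left := s.right
  right := t.right
  top := Φ.h₀₁
  bot := Φ.h₀₀
  w := Φ.wB

/-- Top component of the componentwise pullback of `t` (i.e. `α`) and `betaSq Φ` (i.e. `β`). -/
noncomputable def SqHom.P₁ {s t : Sq C} (Φ : SqHom s t) : C := pullback t.top Φ.h₀₁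

/-- Bottom component of the componentwise pullback of `α` and `β`. -/
noncomputable def SqHom.P₀ {s t : Sq C} (Φ : SqHom s t) : C := pullback t.bot Φ.h₀₀

/-- The induced arrow between the components of the componentwise pullback of `α` and `β`. -/
noncomputable def SqHom.fP {s t : Sq C} (Φ : SqHom s t) : Φ.P₁ ⟶ Φ.P₀ :=
  pullback.map t.top Φ.h₀₁ t.bot Φ.h₀₀ t.left s.right t.right t.w Φ.wB

/-- The top comparison morphism. -/
noncomputable def SqHom.c₁ {s t : Sq C} (Φ : SqHom s t) : s.A₁ ⟶ Φ.P₁ :=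
  pullback.lift Φ.h₁₁ s.top Φ.wt

/-- The bottom comparison morphism. -/
noncomputable def SqHom.c₀ {s t : Sq C} (Φ : SqHom s t) : s.A₀ ⟶ Φ.P₀ :=
  pullback.lift Φ.h₁₀ s.bot Φ.wb

lemma SqHom.comp_w {s t : Sq C} (Φ : SqHom s t) : Φ.c₁ ≫ Φ.fP = s.left ≫ Φ.c₀ := by
  apply pullback.hom_ext
  · simp [SqHom.c₁, SqHom.c₀, SqHom.fP, SqHom.P₀, SqHom.P₁, pullback.lift_fst, pullback.lift_fst_assoc, Φ.wA]
  · simp [SqHom.c₁, SqHom.c₀, SqHom.fP, SqHom.P₀, SqHom.P₁, pullback.lift_snd, pullback.lift_snd_assoc, s.w]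

/-- The comparison square of the cube `Φ`, from `s.left` to the componentwise pullback
of `α` and `β`. -/
noncomputable def SqHom.compSq {s t : Sq C} (Φ : SqHom s t) : Sq C where
  A₁ := s.A₁
  A₀ := s.A₀
  B₁ := Φ.P₁
  B₀ := Φ.P₀
  left := s.left
  right := Φ.fP
  top := Φ.c₁
  bot := Φ.c₀
  w := Φ.comp_w

/-- A `3`-cubical extension: the two opposite faces `γ = s` and `α = t`, the two connecting
faces `σ` and `β`, and the comparison square to the componentwise pullback of `α` and `β`
are all double extensions. -/
def SqHom.Is3CubExt {s t : Sq C} (Φ : SqHom s t) : Prop :=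
  s.IsDE ∧ t.IsDE ∧ Φ.sigmaSq.IsDE ∧ Φ.betaSq.IsDE ∧ Φ.compSq.IsDE

end Cube

/-- The cube `Φ : s ⟶ t` is a limit cube: the cone from the initial vertex `s.A₁` on the
diagram formed by the remaining seven vertices is a limit cone. -/
def SqHom.IsLimitCube {s t : Sq C} (Φ : SqHom s t) : Prop :=
  ∀ (W : C) (wA₀ : W ⟶ s.A₀) (wB₁ : W ⟶ s.B₁) (wtA₁ : W ⟶ t.A₁),
    wA₀ ≫ s.bot = wB₁ ≫ s.right →
    wA₀ ≫ Φ.h₁₀ = wtA₁ ≫ t.left →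
    wB₁ ≫ Φ.h₀₁ = wtA₁ ≫ t.top →
    ∃! u : W ⟶ s.A₁, u ≫ s.left = wA₀ ∧ u ≫ s.top = wB₁ ∧ u ≫ Φ.h₁₁ = wtA₁

/-- A discrete fibration (of order 3): a `3`-cubical extension which is a limit cube. -/
def SqHom.IsDiscFib [HasFiniteLimits C] {s t : Sq C} (Φ : SqHom s t) : Prop :=
  Φ.Is3CubExt ∧ Φ.IsLimitCube
section Galois
variable [HasFiniteLimits C]

/-- A strongly E-Birkhoff Galois structure on `C`: a full replete reflective subcategory
(given by the predicate `inB`, the reflector `F` and the unit `η`) such that every unit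
component is a regular epimorphism and every naturality square of the unit at a regular
epimorphism is a double extension. -/
structure BirkhoffStructure (C : Type u) [Category.{v} C] [HasFiniteLimits C] where
  inB : C → Prop
  replete : ∀ {X Y : C}, inB X → (X ≅ Y) → inB Y
  F : C ⥤ C
  η : 𝟭 C ⟶ F
  obj_inB : ∀ A : C, inB (F.obj A)
  unit_regEpi : ∀ A : C, IsRegEpi (η.app A)
  univ : ∀ {A X : C}, inB X → ∀ g : A ⟶ X, ∃! h : F.obj A ⟶ X, η.app A ≫ h = g
  stronglyBirkhoff : ∀ {A B : C} (f : A ⟶ B), IsRegEpi f →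
    IsDoubleExt f (F.map f) (η.app A) (η.app B)

/-- A trivial covering: a regular epimorphism whose unit naturality square is a pullback. -/
def TrivialCovering (G : BirkhoffStructure C) {T E : C} (t : T ⟶ E) : Prop :=
  IsRegEpi t ∧ IsPullback (G.η.app T) t (G.F.map t) (G.η.app E)

/-- A covering: a regular epimorphism whose pullback along some regular epimorphism is a
trivial covering. -/
def Covering (G : BirkhoffStructure C) {A B : C} (c : A ⟶ B) : Prop :=
  IsRegEpi c ∧ ∃ (E : C) (e : E ⟶ B), IsRegEpi e ∧ TrivialCovering G (pullback.snd c e)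

end Galois

/-- The underlying square in `C` of a morphism of `Ext C`. -/
def sqOfHom {f g : ExtCat C} (φ : f ⟶ g) : Sq C where
  A₁ := f.obj.left
  A₀ := f.obj.right
  B₁ := g.obj.left
  B₀ := g.obj.right
  left := f.obj.hom
  right := g.obj.hom
  top := ExtCat.homLeft φ
  bot := ExtCat.homRight φ
  w := ExtCat.hom_w φ

/-- The underlying cube in `C` of a naturality square in `Ext C` of a natural
transformation `η₁ : 𝟭 (Ext C) ⟶ F₁` at a morphism `φ : f ⟶ g` of `Ext C`. -/
def natCube (F₁ : ExtCat C ⥤ ExtCat C) (η₁ : 𝟭 (ExtCat C) ⟶ F₁) {f g : ExtCat C}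
    (φ : f ⟶ g) : SqHom (sqOfHom φ) (sqOfHom (F₁.map φ)) where
  h₁₁ := ExtCat.homLeft (η₁.app f)
  h₁₀ := ExtCat.homRight (η₁.app f)
  h₀₁ := ExtCat.homLeft (η₁.app g)
  h₀₀ := ExtCat.homRight (η₁.app g)
  wA := ExtCat.hom_w (η₁.app f)
  wB := ExtCat.hom_w (η₁.app g)
  wt := by
    have h := congrArg ExtCat.homLeft (η₁.naturality φ)
    rw [ExtCat.homLeft_comp, ExtCat.homLeft_comp] at h
    exact h.symm
  wb := by
    have h := congrArg ExtCat.homRight (η₁.naturality φ)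
    rw [ExtCat.homRight_comp, ExtCat.homRight_comp] at h
    exact h.symm

section LevelOne
variable [HasFiniteLimits C]

/-- The level-one Galois structure induced by a strongly E-Birkhoff Galois structure `G`:
the coverings form a reflective subcategory of `Ext C`, with reflector `F₁` and unit `η₁`,
every unit component is a double extension, and the reflection is strongly E₂-Birkhoff. -/
structure LevelOne (G : BirkhoffStructure C) where
  F₁ : ExtCat C ⥤ ExtCat C
  η₁ : 𝟭 (ExtCat C) ⟶ F₁
  obj_cov : ∀ f : ExtCat C, Covering G (F₁.obj f).obj.hom
  univ : ∀ {f x : ExtCat C}, Covering G x.obj.hom → ∀ g : f ⟶ x,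
    ∃! h : F₁.obj f ⟶ x, η₁.app f ≫ h = g
  unit_DE : ∀ f : ExtCat C, (sqOfHom (η₁.app f)).IsDE
  stronglyBirkhoff : ∀ {f g : ExtCat C} (φ : f ⟶ g), (sqOfHom φ).IsDE →
    (natCube F₁ η₁ φ).Is3CubExt

/-- A trivial double covering: a morphism of `Ext C` whose underlying square is a double
extension and whose `η₁`-naturality square is a pullback in `Ext C`. -/
def TrivDoubleCov {G : BirkhoffStructure C} (L : LevelOne G) {f g : ExtCat C}
    (φ : f ⟶ g) : Prop :=
  (sqOfHom φ).IsDE ∧ IsPullback (L.η₁.app f) φ (L.F₁.map φ) (L.η₁.app g)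

/-- A double covering: a double extension `α : d ⟶ c` in `Ext C` such that the pullback of
`α` along some double extension `γ : e ⟶ c` is a trivial double covering. -/
def DoubleCov {G : BirkhoffStructure C} (L : LevelOne G) {d c : ExtCat C}
    (α : d ⟶ c) : Prop :=
  (sqOfHom α).IsDE ∧ ∃ (e : ExtCat C) (γ : e ⟶ c), (sqOfHom γ).IsDE ∧
    ∃ (p : ExtCat C) (pγ : p ⟶ e) (pα : p ⟶ d),
      IsPullback pγ pα γ α ∧ TrivDoubleCov L pγ

end LevelOne

/-!
The same object `E` that witnesses that `fA` is a covering witnesses it for `fB`, via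
`e ≫ φ₀`. The induced map `A₁ ×_{A₀} E → B₁ ×_{B₀} E` over `E` is a base change of the
comparison map of the double extension, hence a regular epimorphism, so it suffices that a
quotient over the same base of a trivial covering is a trivial covering. For such a quotient
`g` the comparison map of its unit square is a regular epimorphism by the strong Birkhoff
property, and a monomorphism by a diagram chase through the trivial covering; hence it is an
isomorphism.
-/

lemma isRegEpi_iff_isRegularEpi {X Y : C} (f : X ⟶ Y) : IsRegEpi f ↔ IsRegularEpi f :=
  ⟨fun h => ⟨h⟩, fun h => h.regularEpi⟩

section NaturalityComparison

variable [HasFiniteLimits C] {F : C ⥤ C} (η : 𝟭 C ⟶ F)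

noncomputable def naturalityComparison {X Y : C} (f : X ⟶ Y) :
    X ⟶ pullback (η.app Y) (F.map f) :=
  pullback.lift f (η.app X) (η.naturality f)

@[simp]
lemma naturalityComparison_fst {X Y : C} (f : X ⟶ Y) :
    naturalityComparison η f ≫ pullback.fst (η.app Y) (F.map f) = f :=
  pullback.lift_fst _ _ _

@[simp]
lemma naturalityComparison_snd {X Y : C} (f : X ⟶ Y) :
    naturalityComparison η f ≫ pullback.snd (η.app Y) (F.map f) = η.app X :=
  pullback.lift_snd _ _ _

lemma isPullback_of_isIso_naturalityComparison {X Y : C} (f : X ⟶ Y)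
    [IsIso (naturalityComparison η f)] : IsPullback (η.app X) f (F.map f) (η.app Y) :=
  (IsPullback.of_iso_pullback ⟨η.naturality f⟩ (asIso (naturalityComparison η f))
    (by simp) (by simp)).flip

end NaturalityComparison

section Regular

variable [HasFiniteLimits C] [RegularCat C]

instance RegularCat.regular : Regular C where
  hasCoequalizer_of_isKernelPair {_ _ _ f _ _} hk :=
    have := RegularCat.hasCoeqOfKernelPairs f
    hasColimit_of_iso (F := parallelPair (pullback.fst f f) (pullback.snd f f))
      (parallelPair.ext hk.isoPullback (Iso.refl _))
  regularEpiIsStableUnderBaseChange := by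
    refine .of_forall_exists_isPullback fun f g _ hg =>
      ⟨_, _, _, (IsPullback.of_hasPullback g f).flip, ?_⟩
    rw [MorphismProperty.regularEpi_iff, ← isRegEpi_iff_isRegularEpi] at hg ⊢
    exact RegularCat.regEpiPullbackStable g f hg

lemma IsRegEpi.comp {X Y Z : C} {f : X ⟶ Y} {g : Y ⟶ Z} (hf : IsRegEpi f) (hg : IsRegEpi g) :
    IsRegEpi (f ≫ g) := by
  rw [isRegEpi_iff_isRegularEpi] at hf hg ⊢
  infer_instance

/-- The factorisation is the base change of the comparison map `A₁ ⟶ A₀ ×_{B₀} B₁` along the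
canonical map `B₁ ×_{B₀} E ⟶ A₀ ×_{B₀} B₁`. -/
lemma exists_isRegEpi_factor_pullback_snd {A₁ A₀ B₁ B₀ E : C} {fA : A₁ ⟶ A₀}
    {fB : B₁ ⟶ B₀} {φ₁ : A₁ ⟶ B₁} {φ₀ : A₀ ⟶ B₀} (w : φ₁ ≫ fB = fA ≫ φ₀)
    (hc : IsRegEpi (pullback.lift fA φ₁ w.symm)) (e : E ⟶ A₀) :
    ∃ q : pullback fA e ⟶ pullback fB (e ≫ φ₀),
      IsRegEpi q ∧ q ≫ pullback.snd fB (e ≫ φ₀) = pullback.snd fA e := by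
  have hK := IsPullback.of_right' (IsPullback.of_hasPullback fB (e ≫ φ₀))
    (IsPullback.of_hasPullback φ₀ fB).flip
  have hA : IsPullback (pullback.fst fA e) (pullback.snd fA e)
      (pullback.lift fA φ₁ w.symm ≫ pullback.fst φ₀ fB) e := by
    rw [pullback.lift_fst]
    exact IsPullback.of_hasPullback fA e
  have hq := Regular.regularEpiIsStableUnderBaseChange.of_isPullback (IsPullback.of_bot' hA hK)
    ((isRegEpi_iff_isRegularEpi _).1 hc)
  exact ⟨_, (isRegEpi_iff_isRegularEpi _).2 hq, hK.lift_snd _ _ _⟩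

/-- Given `u, v` with the same comparison image, cover `u` by some `x` through `q`, then cover
the pair `(v, η x)` by some `z` through the comparison map of `q`. Since the unit square of
`q ≫ g` is a pullback, `z` and `x` agree on the cover, whence `u = v`. -/
lemma mono_naturalityComparison_of_isPullback_comp {F : C ⥤ C} (η : 𝟭 C ⟶ F) {T Q E : C}
    (q : T ⟶ Q) (g : Q ⟶ E) [IsRegularEpi q] [IsRegularEpi (naturalityComparison η q)]
    (ht : IsPullback (η.app T) (q ≫ g) (F.map (q ≫ g)) (η.app E)) :
    Mono (naturalityComparison η g) := by
  refine ⟨fun {W} u v huv => ?_⟩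
  have hg : u ≫ g = v ≫ g := by simpa using huv =≫ pullback.fst _ _
  have hη : u ≫ η.app Q = v ≫ η.app Q := by simpa using huv =≫ pullback.snd _ _
  obtain ⟨W₁, p₁, _, x, hx⟩ := Preregular.exists_fac u q
  have hw : (p₁ ≫ v) ≫ η.app Q = (x ≫ η.app T) ≫ F.map q := by
    simpa [← hη, ← reassoc_of% hx] using x ≫= η.naturality q
  obtain ⟨W₂, p₂, _, z, hz⟩ :=
    Preregular.exists_fac (pullback.lift _ _ hw) (naturalityComparison η q)
  have hzq : z ≫ q = p₂ ≫ p₁ ≫ v := by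
    simpa only [Category.assoc, naturalityComparison_fst, pullback.lift_fst] using
      hz =≫ pullback.fst _ _
  have hzη : z ≫ η.app T = p₂ ≫ x ≫ η.app T := by
    simpa only [Category.assoc, naturalityComparison_snd, pullback.lift_snd] using
      hz =≫ pullback.snd _ _
  have hzx : z = p₂ ≫ x :=
    ht.hom_ext (by simpa using hzη) (by simp [reassoc_of% hzq, ← hg, reassoc_of% hx])
  rw [← cancel_epi (p₂ ≫ p₁)]
  simp [← hx, ← hzq, hzx]

lemma TrivialCovering.of_comp {G : BirkhoffStructure C} {T Q E : C} {q : T ⟶ Q} {g : Q ⟶ E}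
    (hq : IsRegEpi q) (hg : IsRegEpi g) (ht : TrivialCovering G (q ≫ g)) :
    TrivialCovering G g := by
  have := (isRegEpi_iff_isRegularEpi _).1 hq
  have : IsRegularEpi (naturalityComparison G.η q) :=
    (isRegEpi_iff_isRegularEpi _).1 (G.stronglyBirkhoff q hq).comparison
  have : IsRegularEpi (naturalityComparison G.η g) :=
    (isRegEpi_iff_isRegularEpi _).1 (G.stronglyBirkhoff g hg).comparison
  have := mono_naturalityComparison_of_isPullback_comp G.η q g ht.2
  have := isIso_of_mono_of_strongEpi (naturalityComparison G.η g)
  exact ⟨hg, isPullback_of_isIso_naturalityComparison G.η g⟩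

end Regular

/-- coverings are stable under quotients along double extensions. -/
theorem statement_13 {C : Type u} [Category.{v} C] [HasFiniteLimits C] [BarrExact C]
    (G : BirkhoffStructure C)
    {A₁ A₀ B₁ B₀ : C} (fA : A₁ ⟶ A₀) (fB : B₁ ⟶ B₀)
    (φ₁ : A₁ ⟶ B₁) (φ₀ : A₀ ⟶ B₀)
    (hde : IsDoubleExt fA fB φ₁ φ₀)
    (h : Covering G fA) :
    Covering G fB := by
  obtain ⟨-, E, e, he, htriv⟩ := h
  obtain ⟨q, hq, hqsnd⟩ := exists_isRegEpi_factor_pullback_snd hde.w hde.comparison e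
  refine ⟨hde.right, E, e ≫ φ₀, he.comp hde.bot, ?_⟩
  rw [← hqsnd] at htriv
  exact htriv.of_comp hq (RegularCat.regEpiPullbackStable _ _ hde.right)

end Paper
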